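/- arXiv:1408.6504 — 6 statements merged into one kernel-verified Lean document; each statement's English description precedes it below -/
import Mathlib

section
/- Among all probability distributions on the positive integers {1,2,...} with mean at most μ (where μ ≥ 1), the geometric distribution with parameter 1/μ maximizes Shannon entropy. -/
/-!
Shifting the index by one turns `f` into a law `p` on `ℕ` with mean `m ≤ μ - 1`. Against the
geometric law `g k = q (1 - q) ^ k`, `q = 1 / μ`, Gibbs' inequality bounds the entropy of `p` by
the cross entropy `-∑ p k log (g k) = -log q - m log (1 - q)`, which is affine and nondecreasing
in the mean `m`; at `m = (1 - q) / q = μ - 1` it is the cross entropy of `g` with itself, i.e. the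
entropy of `g`. When `μ = 1` the only admissible law is the point mass at `1`, of entropy zero.
-/

open Real

namespace Real

lemma negMulLog_le_mul_neg_log_add_sub {x y : ℝ} (hx : 0 ≤ x) (hy : 0 < y) :
    negMulLog x ≤ x * -log y + (y - x) := by
  have h := mul_le_mul_of_nonneg_left (negMulLog_le_one_sub_self (div_nonneg hx hy.le)) hy.le
  calc negMulLog x = negMulLog (y * (x / y)) := by rw [mul_div_cancel₀ x hy.ne']
    _ = x / y * negMulLog y + y * negMulLog (x / y) := negMulLog_mul y (x / y)
    _ ≤ x / y * negMulLog y + y * (1 - x / y) := by gcongr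
    _ = x * -log y + (y - x) := by field_simp; simp only [negMulLog]; ring

theorem tsum_negMulLog_le_tsum_mul_neg_log {ι : Type*} {p g : ι → ℝ} (hp : ∀ i, 0 ≤ p i)
    (hg : ∀ i, 0 < g i) (hps : Summable p) (hgs : Summable g) (hpg : ∑' i, g i ≤ ∑' i, p i)
    (hent : Summable fun i ↦ negMulLog (p i)) (hcross : Summable fun i ↦ p i * -log (g i)) :
    ∑' i, negMulLog (p i) ≤ ∑' i, p i * -log (g i) :=
  calc ∑' i, negMulLog (p i) ≤ ∑' i, (p i * -log (g i) + (g i - p i)) :=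
        hent.tsum_le_tsum (fun i ↦ negMulLog_le_mul_neg_log_add_sub (hp i) (hg i))
          (hcross.add (hgs.sub hps))
    _ = ∑' i, p i * -log (g i) + (∑' i, g i - ∑' i, p i) := by
        rw [hcross.tsum_add (hgs.sub hps), hgs.tsum_sub hps]
    _ ≤ ∑' i, p i * -log (g i) := by linarith

end Real

lemma HasSum.nat_add_one_of_eq_zero {G : Type*} [AddCommGroup G] [TopologicalSpace G]
    [IsTopologicalAddGroup G] {f : ℕ → G} {a : G} (hf : HasSum f a) (h0 : f 0 = 0) :
    HasSum (fun k ↦ f (k + 1)) a := by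
  simpa [h0] using (hasSum_nat_add_iff' 1).2 hf

noncomputable def geometricProb (q : ℝ) (k : ℕ) : ℝ := q * (1 - q) ^ k

section Geometric

variable {q : ℝ} (hq0 : 0 < q) (hq1 : q < 1)
include hq0 hq1

lemma geometricProb_pos (k : ℕ) : 0 < geometricProb q k :=
  mul_pos hq0 (pow_pos (sub_pos.2 hq1) k)

lemma hasSum_geometricProb : HasSum (geometricProb q) 1 := by
  have h := (hasSum_geometric_of_lt_one (sub_nonneg.2 hq1.le) (sub_lt_self 1 hq0)).mul_left q
  rwa [sub_sub_cancel, mul_inv_cancel₀ hq0.ne'] at h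

lemma hasSum_coe_mul_geometricProb :
    HasSum (fun k : ℕ ↦ k * geometricProb q k) ((1 - q) / q) := by
  have hr : ‖1 - q‖ < 1 := by rw [norm_of_nonneg (sub_nonneg.2 hq1.le)]; linarith
  have h := (hasSum_coe_mul_geometric_of_norm_lt_one hr).mul_left q
  rw [sub_sub_cancel, show q * ((1 - q) / q ^ 2) = (1 - q) / q by field_simp] at h
  exact h.congr_fun fun k ↦ by simp only [geometricProb]; ring

lemma hasSum_mul_neg_log_geometricProb {a m : ℝ} {p : ℕ → ℝ} (hsum : HasSum p a)
    (hmean : HasSum (fun k ↦ k * p k) m) :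
    HasSum (fun k ↦ p k * -log (geometricProb q k)) (-log q * a + -log (1 - q) * m) := by
  refine ((hsum.mul_left (-log q)).add (hmean.mul_left (-log (1 - q)))).congr_fun fun k ↦ ?_
  rw [geometricProb, log_mul hq0.ne' (pow_pos (sub_pos.2 hq1) k).ne', log_pow]
  ring

theorem tsum_negMulLog_le_tsum_negMulLog_geometricProb {m : ℝ} {p : ℕ → ℝ} (hp : ∀ k, 0 ≤ p k)
    (hsum : HasSum p 1) (hmean : HasSum (fun k ↦ k * p k) m) (hm : m ≤ (1 - q) / q)
    (hent : Summable fun k ↦ negMulLog (p k)) :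
    ∑' k, negMulLog (p k) ≤ ∑' k, negMulLog (geometricProb q k) := by
  have hg := hasSum_geometricProb hq0 hq1
  have hcross := hasSum_mul_neg_log_geometricProb hq0 hq1 hsum hmean
  have hself := hasSum_mul_neg_log_geometricProb hq0 hq1 hg (hasSum_coe_mul_geometricProb hq0 hq1)
  have hlog : 0 ≤ -log (1 - q) := neg_nonneg.2 (log_nonpos (sub_nonneg.2 hq1.le) (by linarith))
  calc ∑' k, negMulLog (p k) ≤ ∑' k, p k * -log (geometricProb q k) :=
        tsum_negMulLog_le_tsum_mul_neg_log hp (geometricProb_pos hq0 hq1) hsum.summable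
          hg.summable (by rw [hg.tsum_eq, hsum.tsum_eq]) hent hcross.summable
    _ = -log q * 1 + -log (1 - q) * m := hcross.tsum_eq
    _ ≤ -log q * 1 + -log (1 - q) * ((1 - q) / q) := by gcongr
    _ = ∑' k, geometricProb q k * -log (geometricProb q k) := hself.tsum_eq.symm
    _ = ∑' k, negMulLog (geometricProb q k) := by simp only [negMulLog, neg_mul, mul_neg]

end Geometric

theorem tsum_negMulLog_eq_zero_of_mean_nonpos {p : ℕ → ℝ} {m : ℝ} (hp : ∀ k, 0 ≤ p k)
    (hsum : HasSum p 1) (hmean : HasSum (fun k ↦ k * p k) m) (hm : m ≤ 0) :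
    ∑' k, negMulLog (p k) = 0 := by
  have hpos (k : ℕ) (hk : k ≠ 0) : p k = 0 := by
    have := (le_hasSum hmean k fun j _ ↦ mul_nonneg j.cast_nonneg (hp j)).trans hm
    have hk' : (0 : ℝ) < k := by positivity
    nlinarith [hp k]
  have h0 : p 0 = 1 := (hasSum_single 0 hpos).unique hsum
  have hterm (k : ℕ) : negMulLog (p k) = 0 := by
    rcases eq_or_ne k 0 with rfl | hk
    · simp [h0]
    · simp [hpos k hk]
  simp [hterm]

/-- Among all probability distributions on {1,2,...} with mean at most μ (μ ≥ 1),
the geometric distribution with parameter 1/μ maximizes Shannon entropy.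
Here `f k` is the probability of the value `k` (so `f 0 = 0`), and the geometric
distribution with parameter 1/μ assigns (1/μ)(1-1/μ)^(k-1) to the value k. -/
theorem stmt_1 (μ : ℝ) (hμ : 1 ≤ μ) (f : ℕ → ℝ)
    (hf0 : f 0 = 0) (hfnn : ∀ k, 0 ≤ f k)
    (hsum : Summable f) (htot : ∑' k, f k = 1)
    (hmean_sum : Summable fun k : ℕ => (k : ℝ) * f k)
    (hmean : ∑' k : ℕ, (k : ℝ) * f k ≤ μ)
    (hent : Summable fun k : ℕ => Real.negMulLog (f k)) :
    ∑' k : ℕ, Real.negMulLog (f k) ≤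
      ∑' k : ℕ, Real.negMulLog ((1 / μ) * (1 - 1 / μ) ^ k) := by
  set p : ℕ → ℝ := fun k ↦ f (k + 1)
  have hp : HasSum p 1 := htot ▸ hsum.hasSum.nat_add_one_of_eq_zero hf0
  have hpmean : HasSum (fun k : ℕ ↦ k * p k) (∑' k : ℕ, k * f k - 1) := by
    refine ((hmean_sum.hasSum.nat_add_one_of_eq_zero (by simp)).sub hp).congr_fun fun k ↦ ?_
    simp only [p]
    push_cast
    ring
  have hpent : HasSum (fun k ↦ negMulLog (p k)) (∑' k, negMulLog (f k)) :=
    hent.hasSum.nat_add_one_of_eq_zero (by simp [hf0])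
  rw [← hpent.tsum_eq]
  rcases hμ.eq_or_lt with rfl | hμ1
  · rw [tsum_negMulLog_eq_zero_of_mean_nonpos (fun k ↦ hfnn _) hp hpmean (by linarith)]
    exact tsum_nonneg fun k ↦ negMulLog_nonneg (by positivity) (by simp [pow_le_one₀])
  · refine tsum_negMulLog_le_tsum_negMulLog_geometricProb (by positivity)
      ((div_lt_one (by positivity)).2 hμ1) (fun k ↦ hfnn _) hp hpmean ?_ hpent.summable
    field_simp
    linarith
end

section
/- Let Z be geometric on {0,1,2,...} with parameter q ∈ (0,1), i.e., P(Z=z) = q(1-q)^z, and let Z_t be the truncated geometric distribution on {0,1,...,t-1} with P(Z_t = z) = q(1-q)^z / (1-(1-q)^t). Then H(Z) - H(Z_t) = H₂((1-q)^t) / (1-(1-q)^t), where H₂ is the binary entropy function. -/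
open Finset in
private lemma sum_zr_aux (r : ℝ) (t : ℕ) :
    (1 - r) ^ 2 * ∑ z ∈ Finset.range t, (z : ℝ) * r ^ z
      = r - t * r ^ t + ((t : ℝ) - 1) * r ^ (t + 1) := by
  induction t with
  | zero => simp
  | succ n ih =>
    rw [Finset.sum_range_succ, mul_add, ih]
    push_cast
    ring

open Finset in
private lemma sum_r_aux (r : ℝ) (t : ℕ) :
    (1 - r) * ∑ z ∈ Finset.range t, r ^ z = 1 - r ^ t := by
  induction t with
  | zero => simp
  | succ n ih =>
    rw [Finset.sum_range_succ, mul_add, ih]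
    ring

/-- For Z geometric on {0,1,...} with parameter q and Z_t its truncation to
{0,...,t-1}, H(Z) - H(Z_t) = H₂((1-q)^t)/(1-(1-q)^t), entropies in bits. -/
theorem stmt_2 (q : ℝ) (hq0 : 0 < q) (hq1 : q < 1) (t : ℕ) (ht : 1 ≤ t) :
    (∑' z : ℕ, -(q * (1 - q) ^ z * Real.logb 2 (q * (1 - q) ^ z))) -
      (∑ z ∈ Finset.range t,
        -((q * (1 - q) ^ z / (1 - (1 - q) ^ t)) *
          Real.logb 2 (q * (1 - q) ^ z / (1 - (1 - q) ^ t)))) =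
    (-((1 - q) ^ t * Real.logb 2 ((1 - q) ^ t)) -
      (1 - (1 - q) ^ t) * Real.logb 2 (1 - (1 - q) ^ t)) / (1 - (1 - q) ^ t) := by
  set r := 1 - q with hrdef
  have hr0 : 0 < r := by simp [hrdef]; linarith
  have hr1 : r < 1 := by simp only [hrdef]; linarith
  have hrt1 : r ^ t < 1 := pow_lt_one₀ hr0.le hr1 (by omega)
  have hS : 0 < 1 - r ^ t := by linarith
  have hq : 1 - r = q := by rw [hrdef]; ring
  -- term rewriting for the infinite sum
  have hterm : ∀ z : ℕ, -(q * r ^ z * Real.logb 2 (q * r ^ z))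
      = (-q * Real.logb 2 q) * r ^ z + (-q * Real.logb 2 r) * ((z : ℝ) * r ^ z) := by
    intro z
    rw [Real.logb_mul hq0.ne' (pow_ne_zero z hr0.ne'), Real.logb_pow]
    ring
  have hsum1 : Summable (fun z : ℕ => r ^ z) := summable_geometric_of_lt_one hr0.le hr1
  have hsum2 : Summable (fun z : ℕ => (z : ℝ) * r ^ z) :=
    (hasSum_coe_mul_geometric_of_norm_lt_one
      (by rwa [Real.norm_eq_abs, abs_of_pos hr0])).summable
  have htsum : (∑' z : ℕ, -(q * r ^ z * Real.logb 2 (q * r ^ z)))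
      = (-q * Real.logb 2 q) * (1 - r)⁻¹ + (-q * Real.logb 2 r) * (r / (1 - r) ^ 2) := by
    rw [tsum_congr hterm, Summable.tsum_add (hsum1.mul_left _) (hsum2.mul_left _),
      tsum_mul_left, tsum_mul_left, tsum_geometric_of_lt_one hr0.le hr1,
      tsum_coe_mul_geometric_of_norm_lt_one
        (by rwa [Real.norm_eq_abs, abs_of_pos hr0])]
  rw [htsum]
  -- term rewriting for the finite sum
  have hterm2 : ∀ z ∈ Finset.range t,
      -((q * r ^ z / (1 - r ^ t)) * Real.logb 2 (q * r ^ z / (1 - r ^ t)))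
      = (-(q / (1 - r ^ t)) * (Real.logb 2 q - Real.logb 2 (1 - r ^ t))) * r ^ z
        + (-(q / (1 - r ^ t)) * Real.logb 2 r) * ((z : ℝ) * r ^ z) := by
    intro z _
    rw [Real.logb_div (mul_pos hq0 (pow_pos hr0 z)).ne' hS.ne',
      Real.logb_mul hq0.ne' (pow_ne_zero z hr0.ne'), Real.logb_pow]
    ring
  rw [Finset.sum_congr rfl hterm2, Finset.sum_add_distrib, ← Finset.mul_sum,
    ← Finset.mul_sum]
  -- closed forms for the finite geometric sums
  have hB : ∑ z ∈ Finset.range t, r ^ z = (1 - r ^ t) / q := by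
    have h := sum_r_aux r t
    rw [hq] at h
    field_simp
    linarith [h]
  have hA : ∑ z ∈ Finset.range t, (z : ℝ) * r ^ z
      = (r - t * r ^ t + ((t : ℝ) - 1) * r ^ (t + 1)) / q ^ 2 := by
    have h := sum_zr_aux r t
    rw [hq] at h
    field_simp
    linarith [h]
  rw [hA, hB, Real.logb_pow, hq]
  field_simp
  ring
end

section
/- Fix q ∈ (0,1), t ≥ 1, and a subset A = {a₀ < a₁ < ... < a_{k-1}} ⊆ {0,1,...,t-1} with k ≤ t. Define the distribution p_A on A by p_A(a_i) = q(1-q)^{a_i} / ∑_{j<k} q(1-q)^{a_j}, and let p_{A*} be the truncated geometric distribution with A* = {0,1,...,t-1}, i.e., p_{A*}(i) = q(1-q)^i / (1-(1-q)^t). Then for every n with 0 ≤ n ≤ k-1, the partial sum ∑_{i=0}^n p_A(a_i) ≥ ∑_{i=0}^n p_{A*}(i); that is, p_{A*} is majorized by p_A (after sorting in decreasing order). -/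
/-- Majorization of the truncated geometric distribution by any renormalized
geometric distribution on a subset A = {a 0 < a 1 < ... < a (k-1)} ⊆ {0,...,t-1}:
for every n ≤ k-1, the n-th partial sum of p_A dominates that of p_{A*}. -/
theorem stmt_3 (q : ℝ) (hq0 : 0 < q) (hq1 : q < 1) (t k : ℕ) (hk1 : 1 ≤ k)
    (hkt : k ≤ t) (a : ℕ → ℕ)
    (ha_lt : ∀ i < k, a i < t)
    (ha_mono : ∀ i j, i < j → j < k → a i < a j) :
    ∀ n < k,
      ∑ i ∈ Finset.range (n + 1),
          q * (1 - q) ^ (a i) / (∑ j ∈ Finset.range k, q * (1 - q) ^ (a j)) ≥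
        ∑ i ∈ Finset.range (n + 1), q * (1 - q) ^ i / (1 - (1 - q) ^ t) := by
  intro n hn
  set r : ℝ := 1 - q with hrdef
  have hr0 : (0:ℝ) < r := by simp only [hrdef]; linarith
  have hr0' : (0:ℝ) ≤ r := hr0.le
  have hr1 : r < 1 := by simp only [hrdef]; linarith
  have ht0 : 0 < t := lt_of_lt_of_le (by omega : 0 < k) hkt
  -- monotonicity of a with step sizes
  have hdiff : ∀ j i, j ≤ i → i < k → a j + i ≤ a i + j := by
    intro j i hji hik
    have haux : ∀ d, j + d < k → a j + d ≤ a (j + d) := by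
      intro d
      induction d with
      | zero => simp
      | succ m ih =>
        intro h
        have h1 := ih (by omega)
        have h2 : a (j + m) < a (j + m + 1) := ha_mono _ _ (by omega) (by omega)
        have h3 : a (j + (m + 1)) = a (j + m + 1) := rfl
        omega
    have := haux (i - j) (by omega)
    have heq : j + (i - j) = i := by omega
    rw [heq] at this
    omega
  have hterm : ∀ j i, j ≤ i → r ^ (a i) * r ^ j ≤ r ^ (a j) * r ^ i → True := fun _ _ _ _ => trivial
  have hterm' : ∀ j i, j ≤ i → i < k → r ^ (a i) * r ^ j ≤ r ^ (a j) * r ^ i := by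
    intro j i hji hik
    rw [← pow_add, ← pow_add]
    exact pow_le_pow_of_le_one hr0' hr1.le (hdiff j i hji hik)
  -- denominators positive
  have hS : 0 < ∑ j ∈ Finset.range k, q * r ^ (a j) := by
    apply Finset.sum_pos
    · intro i _; positivity
    · exact ⟨0, Finset.mem_range.mpr (by omega)⟩
  have hT : 0 < 1 - r ^ t := by
    have : r ^ t < 1 := pow_lt_one₀ hr0' hr1 (by omega)
    linarith
  have hT' : 1 - r ^ t = ∑ i ∈ Finset.range t, q * r ^ i := by
    have hq : q ≠ 0 := ne_of_gt hq0
    rw [← Finset.mul_sum, geom_sum_eq (ne_of_lt hr1), hrdef,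
      show (1:ℝ) - q - 1 = -q from by ring]
    rw [← mul_div_assoc, eq_div_iff (neg_ne_zero.mpr hq)]
    ring
  rw [ge_iff_le, ← Finset.sum_div, ← Finset.sum_div, div_le_div_iff₀ hT hS]
  -- split sums
  have hsplitS : ∑ j ∈ Finset.range k, q * r ^ (a j)
      = (∑ j ∈ Finset.range (n+1), q * r ^ (a j))
        + ∑ j ∈ Finset.Ico (n+1) k, q * r ^ (a j) := by
    rw [Finset.range_eq_Ico, ← Finset.sum_Ico_consecutive _ (by omega : 0 ≤ n+1) (by omega : n+1 ≤ k),
      ← Finset.range_eq_Ico]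
  have hsplitT : ∑ i ∈ Finset.range t, q * r ^ i
      = (∑ i ∈ Finset.range (n+1), q * r ^ i)
        + ∑ i ∈ Finset.Ico (n+1) t, q * r ^ i := by
    rw [Finset.range_eq_Ico, ← Finset.sum_Ico_consecutive _ (by omega : 0 ≤ n+1) (by omega : n+1 ≤ t),
      ← Finset.range_eq_Ico]
  rw [hT', hsplitS, hsplitT]
  have key : (∑ i ∈ Finset.range (n+1), q * r ^ i) * (∑ j ∈ Finset.Ico (n+1) k, q * r ^ (a j))
      ≤ (∑ i ∈ Finset.range (n+1), q * r ^ (a i)) * (∑ i ∈ Finset.Ico (n+1) t, q * r ^ i) := by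
    rw [Finset.sum_mul_sum, Finset.sum_mul_sum]
    apply Finset.sum_le_sum
    intro j hj
    have hjn : j ≤ n := by simpa [Nat.lt_succ_iff] using hj
    calc ∑ i ∈ Finset.Ico (n+1) k, (q * r ^ j) * (q * r ^ (a i))
        ≤ ∑ i ∈ Finset.Ico (n+1) k, (q * r ^ (a j)) * (q * r ^ i) := by
          apply Finset.sum_le_sum
          intro i hi
          obtain ⟨hi1, hi2⟩ := Finset.mem_Ico.mp hi
          have h := hterm' j i (by omega) hi2
          calc (q * r ^ j) * (q * r ^ (a i)) = q * q * (r ^ (a i) * r ^ j) := by ring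
            _ ≤ q * q * (r ^ (a j) * r ^ i) := by
                apply mul_le_mul_of_nonneg_left h (by positivity)
            _ = (q * r ^ (a j)) * (q * r ^ i) := by ring
      _ ≤ ∑ i ∈ Finset.Ico (n+1) t, (q * r ^ (a j)) * (q * r ^ i) := by
          apply Finset.sum_le_sum_of_subset_of_nonneg
          · exact Finset.Ico_subset_Ico le_rfl hkt
          · intro i _ _; positivity
  nlinarith [key]
end

section
/- Fix q ∈ (0,1) and t ≥ 1. Among all probability distributions supported on a nonempty subset A ⊆ {0,1,...,t-1} of the form p_A(z) = q(1-q)^z / ∑_{a∈A} q(1-q)^a for z ∈ A (and 0 elsewhere), the Shannon entropy is maximized when A = {0,1,...,t-1}, i.e., by the truncated geometric distribution. -/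
open Finset Real

lemma aux_mono {k : ℕ} (f : Fin k → ℕ) (hf : StrictMono f) (d : ℕ) :
    ∀ (i z : Fin k), (i : ℕ) + d = (z : ℕ) → f i + d ≤ f z := by
  induction d with
  | zero =>
    intro i z h
    have : i = z := Fin.ext (by omega)
    simp [this]
  | succ d ih =>
    intro i z h
    have hm : (i : ℕ) + d < k := by omega
    have h1 := ih i ⟨(i : ℕ) + d, hm⟩ rfl
    have h2 : f ⟨(i : ℕ) + d, hm⟩ < f z := hf (by simp [Fin.lt_def]; omega)
    omega

lemma aux_mono' {k : ℕ} (f : Fin k → ℕ) (hf : StrictMono f) (i z : Fin k)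
    (h : (i : ℕ) ≤ (z : ℕ)) : f i + (z : ℕ) ≤ f z + (i : ℕ) := by
  have := aux_mono f hf ((z : ℕ) - (i : ℕ)) i z (by omega)
  omega

lemma gibbs {ι : Type*} (s : Finset ι) (u v : ι → ℝ)
    (hu : ∀ i ∈ s, 0 < u i) (hv : ∀ i ∈ s, 0 < v i)
    (hu1 : ∑ i ∈ s, u i = 1) (hv1 : ∑ i ∈ s, v i ≤ 1) :
    ∑ i ∈ s, Real.negMulLog (u i) ≤ ∑ i ∈ s, u i * (- Real.log (v i)) := by
  have key : ∀ i ∈ s,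
      Real.negMulLog (u i) - u i * (- Real.log (v i)) ≤ v i - u i := by
    intro i hi
    have hui := hu i hi; have hvi := hv i hi
    have hlog : Real.log (v i / u i) ≤ v i / u i - 1 :=
      Real.log_le_sub_one_of_pos (by positivity)
    have heq : Real.negMulLog (u i) - u i * (- Real.log (v i))
        = u i * Real.log (v i / u i) := by
      rw [Real.log_div hvi.ne' hui.ne', Real.negMulLog]; ring
    rw [heq]
    calc u i * Real.log (v i / u i) ≤ u i * (v i / u i - 1) :=
          mul_le_mul_of_nonneg_left hlog hui.le
      _ = v i - u i := by field_simp
  have h2 := Finset.sum_le_sum key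
  rw [Finset.sum_sub_distrib, Finset.sum_sub_distrib] at h2
  linarith

lemma entropy_eq {ι : Type*} (s : Finset ι) (e : ι → ℕ) (q r S : ℝ)
    (hq : 0 < q) (hr : 0 < r) (hS : ∑ i ∈ s, q * r ^ e i = S) (hS0 : 0 < S) :
    ∑ i ∈ s, Real.negMulLog (q * r ^ e i / S)
      = (Real.log S - Real.log q)
        + (- Real.log r) * ∑ i ∈ s, (q * r ^ e i / S) * (e i : ℝ) := by
  have h1 : ∀ i ∈ s, Real.negMulLog (q * r ^ e i / S)
      = (Real.log S - Real.log q) * (q * r ^ e i / S)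
        + (- Real.log r) * ((q * r ^ e i / S) * (e i : ℝ)) := by
    intro i _
    have hw : (0:ℝ) < q * r ^ e i := by positivity
    rw [Real.negMulLog, Real.log_div hw.ne' hS0.ne',
      Real.log_mul hq.ne' (by positivity), Real.log_pow]
    ring
  rw [Finset.sum_congr rfl h1, Finset.sum_add_distrib, ← Finset.mul_sum,
    ← Finset.mul_sum, ← Finset.sum_div, hS, div_self hS0.ne']
  ring

set_option maxHeartbeats 1000000 in
/-- Among all distributions obtained by renormalizing the geometric weights
q(1-q)^z to a nonempty subset A of {0,...,t-1}, Shannon entropy is maximized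
by the truncated geometric distribution (A = {0,...,t-1}). -/
theorem stmt_4 (q : ℝ) (hq0 : 0 < q) (hq1 : q < 1) (t : ℕ) (ht : 1 ≤ t)
    (A : Finset ℕ) (hA : A.Nonempty) (hAsub : A ⊆ Finset.range t) :
    ∑ z ∈ A, Real.negMulLog (q * (1 - q) ^ z / (∑ a ∈ A, q * (1 - q) ^ a)) ≤
      ∑ z ∈ Finset.range t,
        Real.negMulLog
          (q * (1 - q) ^ z / (∑ a ∈ Finset.range t, q * (1 - q) ^ a)) := by
  set r := 1 - q with hrdef
  have hr0 : (0:ℝ) < r := by simp [hrdef]; linarith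
  have hr1 : r < 1 := by simp [hrdef]; linarith
  have hlogr : Real.log r < 0 := Real.log_neg hr0 hr1
  set k := A.card with hkdef
  have hk0 : 0 < k := Finset.card_pos.mpr hA
  have hkt : k ≤ t := by
    have := Finset.card_le_card hAsub
    simpa using this
  set f : Fin k ↪o ℕ := A.orderEmbOfFin hkdef.symm with hfdef
  have hfmono : StrictMono f := f.strictMono
  -- sum over A as sum over Fin k
  have hbij : ∀ G : ℕ → ℝ, ∑ i : Fin k, G (f i) = ∑ a ∈ A, G a := by
    intro G
    apply Finset.sum_bij (fun i _ => f i)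
    · intro i _; exact Finset.orderEmbOfFin_mem A hkdef.symm i
    · intro i _ j _ h; exact f.injective h
    · intro b hb
      have : b ∈ Set.range f := by
        rw [hfdef, Finset.range_orderEmbOfFin]; exact hb
      obtain ⟨i, hi⟩ := this
      exact ⟨i, Finset.mem_univ i, hi⟩
    · intro i _; rfl
  set SA := ∑ a ∈ A, q * r ^ a with hSAdef
  set St := ∑ z ∈ Finset.range t, q * r ^ z with hStdef
  have hSA : 0 < SA :=
    Finset.sum_pos (fun a _ => by positivity) hA
  have hSt : 0 < St :=
    Finset.sum_pos (fun a _ => by positivity) (by simp; omega)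
  have hSA' : ∑ i : Fin k, q * r ^ (f i) = SA := by
    rw [hSAdef]; exact hbij (fun a => q * r ^ a)
  -- probability vectors
  set u : Fin k → ℝ := fun i => q * r ^ (f i) / SA with hudef
  set v : Fin k → ℝ := fun i => q * r ^ (i : ℕ) / St with hvdef
  have hu1 : ∑ i : Fin k, u i = 1 := by
    rw [hudef]
    rw [← Finset.sum_div, hSA', div_self hSA.ne']
  have hv1 : ∑ i : Fin k, v i ≤ 1 := by
    rw [hvdef, ← Finset.sum_div, div_le_one hSt]
    calc ∑ i : Fin k, q * r ^ (i : ℕ)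
        = ∑ i ∈ Finset.range k, q * r ^ i := Fin.sum_univ_eq_sum_range (fun i => q * r ^ i) k
      _ ≤ St := by
          rw [hStdef]
          exact Finset.sum_le_sum_of_subset_of_nonneg (Finset.range_subset_range.mpr hkt)
            (fun i _ _ => by positivity)
  -- Gibbs
  have hgibbs : ∑ i : Fin k, Real.negMulLog (u i)
      ≤ ∑ i : Fin k, u i * (- Real.log (v i)) :=
    gibbs _ u v (fun i _ => by rw [hudef]; positivity)
      (fun i _ => by rw [hvdef]; positivity) hu1 hv1
  -- rewrite LHS
  have hLHS : ∑ z ∈ A, Real.negMulLog (q * r ^ z / SA)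
      = ∑ i : Fin k, Real.negMulLog (u i) :=
      (hbij (fun a => Real.negMulLog (q * r ^ a / SA))).symm
  -- Gibbs RHS closed form
  have hgRHS : ∑ i : Fin k, u i * (- Real.log (v i))
      = (Real.log St - Real.log q)
        + (- Real.log r) * ∑ i : Fin k, u i * ((i : ℕ) : ℝ) := by
    have h1 : ∀ i : Fin k, u i * (- Real.log (v i))
        = (Real.log St - Real.log q) * u i
          + (- Real.log r) * (u i * ((i : ℕ) : ℝ)) := by
      intro i
      have hw : (0:ℝ) < q * r ^ (i : ℕ) := by positivity
      rw [hvdef]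
      simp only []
      rw [Real.log_div hw.ne' hSt.ne', Real.log_mul hq0.ne' (by positivity),
        Real.log_pow]
      ring
    rw [Finset.sum_congr rfl (fun i _ => h1 i), Finset.sum_add_distrib,
      ← Finset.mul_sum, ← Finset.mul_sum, hu1]
    ring
  -- RHS closed form
  have hRHS : ∑ z ∈ Finset.range t, Real.negMulLog (q * r ^ z / St)
      = (Real.log St - Real.log q)
        + (- Real.log r) * ∑ z ∈ Finset.range t, (q * r ^ z / St) * (z : ℝ) :=
    entropy_eq _ (fun z => z) q r St hq0 hr0 rfl hSt
  rw [hLHS, hRHS]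
  refine le_trans hgibbs ?_
  rw [hgRHS]
  have hlr : (0:ℝ) ≤ - Real.log r := by linarith
  -- reduce to the mean inequality
  have hmean : ∑ i : Fin k, u i * ((i : ℕ) : ℝ)
      ≤ ∑ z ∈ Finset.range t, (q * r ^ z / St) * (z : ℝ) := by
    have hA' : ∑ i : Fin k, u i * ((i : ℕ) : ℝ)
        = (∑ i : Fin k, ((i : ℕ) : ℝ) * (q * r ^ (f i))) / SA := by
      rw [Finset.sum_div]; congr 1; ext i; rw [hudef]; ring
    have hB' : ∑ z ∈ Finset.range t, (q * r ^ z / St) * (z : ℝ)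
        = (∑ z ∈ Finset.range t, (z : ℝ) * (q * r ^ z)) / St := by
      rw [Finset.sum_div]; congr 1; ext z; ring
    rw [hA', hB', div_le_div_iff₀ hSA hSt]
    -- strip q
    have hq2 : (∑ i : Fin k, ((i : ℕ) : ℝ) * (q * r ^ (f i)))
        = q * ∑ i : Fin k, ((i : ℕ) : ℝ) * r ^ (f i) := by
      rw [Finset.mul_sum]; congr 1; ext i; ring
    have hq3 : (∑ z ∈ Finset.range t, (z : ℝ) * (q * r ^ z))
        = q * ∑ z ∈ Finset.range t, (z : ℝ) * r ^ z := by
      rw [Finset.mul_sum]; congr 1; ext z; ring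
    have hq4 : SA = q * ∑ i : Fin k, r ^ (f i) := by
      rw [← hSA', Finset.mul_sum]
    have hq5 : St = q * ∑ z ∈ Finset.range t, r ^ z := by
      rw [hStdef, Finset.mul_sum]
    set NA := ∑ i : Fin k, ((i : ℕ) : ℝ) * r ^ (f i) with hNA
    set Nt := ∑ z ∈ Finset.range t, (z : ℝ) * r ^ z with hNt
    set TA := ∑ i : Fin k, r ^ (f i) with hTA
    set Tt := ∑ z ∈ Finset.range t, r ^ z with hTt
    rw [hq2, hq3, hq4, hq5]
    have key : NA * Tt ≤ Nt * TA := by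
      -- double-sum difference
      have hD : Nt * TA - NA * Tt
          = ∑ i : Fin k, ∑ z ∈ Finset.range t,
              ((z : ℝ) - ((i : ℕ) : ℝ)) * r ^ ((f i) + z) := by
        have e1 : Nt * TA = ∑ i : Fin k, ∑ z ∈ Finset.range t,
            ((z : ℝ) * r ^ z) * r ^ (f i) := by
          rw [hNt, hTA, Finset.sum_mul_sum]; exact Finset.sum_comm
        have e2 : NA * Tt = ∑ i : Fin k, ∑ z ∈ Finset.range t,
            (((i : ℕ) : ℝ) * r ^ (f i)) * r ^ z := by
          rw [hNA, hTt, Finset.sum_mul_sum]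
        rw [e1, e2, ← Finset.sum_sub_distrib]
        refine Finset.sum_congr rfl fun i _ => ?_
        rw [← Finset.sum_sub_distrib]
        refine Finset.sum_congr rfl fun z _ => ?_
        rw [pow_add]; ring
      have hsplit : ∀ i : Fin k,
          ∑ z ∈ Finset.range t, ((z : ℝ) - ((i : ℕ) : ℝ)) * r ^ ((f i) + z)
          = (∑ z ∈ Finset.range k, ((z : ℝ) - ((i : ℕ) : ℝ)) * r ^ ((f i) + z))
            + ∑ z ∈ Finset.Ico k t, ((z : ℝ) - ((i : ℕ) : ℝ)) * r ^ ((f i) + z) := by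
        intro i
        simp only [Finset.range_eq_Ico]
        exact (Finset.sum_Ico_consecutive _ (Nat.zero_le k) hkt).symm
      have hD2 : (0:ℝ) ≤ ∑ i : Fin k, ∑ z ∈ Finset.Ico k t,
          ((z : ℝ) - ((i : ℕ) : ℝ)) * r ^ ((f i) + z) := by
        apply Finset.sum_nonneg; intro i _
        apply Finset.sum_nonneg; intro z hz
        have hz' : k ≤ z := (Finset.mem_Ico.mp hz).1
        have : ((i : ℕ) : ℝ) ≤ (z : ℝ) := by
          exact_mod_cast le_trans (le_of_lt i.isLt) hz'
        apply mul_nonneg (by linarith) (by positivity)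
      have hD1 : (0:ℝ) ≤ ∑ i : Fin k, ∑ z ∈ Finset.range k,
          ((z : ℝ) - ((i : ℕ) : ℝ)) * r ^ ((f i) + z) := by
        have hfin : ∀ i : Fin k,
            ∑ z ∈ Finset.range k, ((z : ℝ) - ((i : ℕ) : ℝ)) * r ^ ((f i) + z)
            = ∑ z : Fin k, (((z : ℕ) : ℝ) - ((i : ℕ) : ℝ)) * r ^ ((f i) + (z : ℕ)) := by
          intro i; rw [← Fin.sum_univ_eq_sum_range]
        simp only [hfin]
        set S := ∑ i : Fin k, ∑ z : Fin k,
            (((z : ℕ) : ℝ) - ((i : ℕ) : ℝ)) * r ^ ((f i) + (z : ℕ)) with hS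
        have hswap : S = ∑ i : Fin k, ∑ z : Fin k,
            (((i : ℕ) : ℝ) - ((z : ℕ) : ℝ)) * r ^ ((f z) + (i : ℕ)) := by
          rw [hS, Finset.sum_comm]
        have h2S : 0 ≤ S + S := by
          nth_rewrite 2 [hswap]
          rw [← Finset.sum_add_distrib]
          apply Finset.sum_nonneg; intro i _
          rw [← Finset.sum_add_distrib]
          apply Finset.sum_nonneg; intro z _
          rcases le_total ((i : ℕ)) ((z : ℕ)) with h | h
          · have hle := aux_mono' f hfmono i z h
            have hpow : r ^ ((f z) + (i : ℕ)) ≤ r ^ ((f i) + (z : ℕ)) :=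
              pow_le_pow_of_le_one hr0.le hr1.le hle
            have hc : ((i : ℕ) : ℝ) ≤ ((z : ℕ) : ℝ) := by exact_mod_cast h
            nlinarith [pow_nonneg hr0.le ((f z) + (i : ℕ))]
          · have hle := aux_mono' f hfmono z i h
            have hpow : r ^ ((f i) + (z : ℕ)) ≤ r ^ ((f z) + (i : ℕ)) :=
              pow_le_pow_of_le_one hr0.le hr1.le hle
            have hc : ((z : ℕ) : ℝ) ≤ ((i : ℕ) : ℝ) := by exact_mod_cast h
            nlinarith [pow_nonneg hr0.le ((f i) + (z : ℕ))]
        linarith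
      have := Finset.sum_congr rfl (fun i (_ : i ∈ Finset.univ) => hsplit i)
      rw [this, Finset.sum_add_distrib] at hD
      linarith
    have h6 := mul_le_mul_of_nonneg_left key (mul_pos hq0 hq0).le
    nlinarith [h6]
  have h7 := mul_le_mul_of_nonneg_left hmean hlr
  linarith
end

section
/- For q ∈ (0,1) and N = ⌈1/p*⌉ where p* ∈ (0, 1/2] satisfies q = log(1-p*)/log(p*), the following inequality chain holds: log(N)/((N+1)/2 + (1-q)/q) ≥ q·log(N)/(N·q + 1 - q) ≥ -q·p*·log(p*)/(q + p*(1-q)). -/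
/-!
Write `s = (1 - q) / q` and `x = 1 / p*`. The middle quantity is `log N / (N + s)` and the
right-hand one is `log x / (x + s)`, so the first inequality is just `(N + 1) / 2 ≤ N`. For the
second, write `N = x (1 + u)` with `0 ≤ u ≤ p*`; it becomes `u log x ≤ (1 + s p*) log (1 + u)`.
Since `log (1 + u) ≥ 2u / (2 + u) ≥ (1 - p*/2) u`, it suffices that `log x ≤ (1 - p*/2)(1 + s p*)`,
and as `q = log (1 - p*) / log p*` this is the binary-entropy estimate
`log (1/p) log (1/(1-p)) ≤ (1 - p/2) H(p)` for `p ≤ 1/2`. That estimate follows from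
`2 t log (1/t) ≤ 1 - t²` (i.e. `t ≤ sinh t`) at `t = p` and `t = 1 - p`, after splitting the
product with weights `1 - p` and `p`.
-/

open Real

lemma Real.two_mul_mul_log_inv_le {t : ℝ} (ht0 : 0 < t) (ht1 : t ≤ 1) :
    2 * t * log t⁻¹ ≤ 1 - t ^ 2 := by
  have h := self_le_sinh_iff.2 (log_nonneg (one_le_inv_iff₀.2 ⟨ht0, ht1⟩))
  rw [sinh_log (inv_pos.2 ht0), inv_inv] at h
  calc 2 * t * log t⁻¹ ≤ 2 * t * ((t⁻¹ - t) / 2) := by gcongr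
    _ = 1 - t ^ 2 := by field_simp

lemma Real.log_inv_mul_log_one_sub_inv_le {p : ℝ} (hp0 : 0 < p) (hp : p ≤ 1 / 2) :
    log p⁻¹ * log (1 - p)⁻¹ ≤ (1 - p / 2) * binEntropy p := by
  have hL : 0 ≤ log p⁻¹ := log_nonneg (one_le_inv_iff₀.2 ⟨hp0, by linarith⟩)
  have hr : 0 ≤ log (1 - p)⁻¹ := log_nonneg (one_le_inv_iff₀.2 ⟨by linarith, by linarith⟩)
  have hpL : p * log p⁻¹ ≤ (1 - p / 2) * (1 - p) := by
    nlinarith [two_mul_mul_log_inv_le hp0 (by linarith : p ≤ 1)]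
  have hpr : (1 - p) * log (1 - p)⁻¹ ≤ (1 - p / 2) * p := by
    nlinarith [two_mul_mul_log_inv_le (by linarith : 0 < 1 - p) (by linarith : 1 - p ≤ 1)]
  rw [binEntropy]
  linear_combination mul_le_mul_of_nonneg_left hpr hL + mul_le_mul_of_nonneg_right hpL hr

lemma mul_div_mul_add_one_sub_le {q y M : ℝ} (hq : 0 < q) (hy : 1 ≤ y) (hM : 0 ≤ M) :
    q * M / (y * q + 1 - q) ≤ M / ((y + 1) / 2 + (1 - q) / q) := by
  have hs : (1 - q) / q = q⁻¹ - 1 := by field_simp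
  have h : q * M / (y * q + 1 - q) = M / (y + (1 - q) / q) := by
    rw [hs]; field_simp; ring_nf
  rw [h, hs]
  exact div_le_div_of_nonneg_left hM (by linarith [inv_pos.2 hq]) (by linarith)

lemma Real.neg_log_mul_le_of_eq_log_div_log {p q : ℝ} (hp0 : 0 < p) (hp : p ≤ 1 / 2)
    (hq : q = log (1 - p) / log p) :
    0 < q ∧ -log p * q ≤ (1 - p / 2) * (q + p * (1 - q)) := by
  have hL : 0 < -log p := neg_pos.2 (log_neg hp0 (by linarith))
  have hr : 0 < -log (1 - p) := neg_pos.2 (log_neg (by linarith) (by linarith))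
  have hqL : -log (1 - p) = q * -log p := by
    rw [hq]; field_simp [(neg_pos.1 hL).ne]
  have h := log_inv_mul_log_one_sub_inv_le hp0 hp
  rw [binEntropy, log_inv, log_inv, hqL] at h
  refine ⟨by nlinarith, le_of_mul_le_mul_left ?_ hL⟩
  linear_combination h

lemma neg_mul_log_div_le_mul_log_div {p q y : ℝ} (hp0 : 0 < p) (hp : p ≤ 1 / 2)
    (hq : q = log (1 - p) / log p) (hy : 1 / p ≤ y) (hy' : y ≤ 1 / p + 1) :
    -(q * p * log p) / (q + p * (1 - q)) ≤ q * log y / (y * q + 1 - q) := by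
  obtain ⟨hq0, key⟩ := neg_log_mul_le_of_eq_log_div_log hp0 hp hq
  have hpy : 1 ≤ p * y := (div_le_iff₀' hp0).1 hy
  have hpy' : p * y ≤ 1 + p := by
    have := mul_le_mul_of_nonneg_left hy' hp0.le
    rwa [mul_add, mul_one_div_cancel hp0.ne', mul_one] at this
  set u := p * y - 1 with hudef
  have hu0 : 0 ≤ u := by linarith
  have hlogy : log y = -log p + log (1 + u) := by
    rw [← log_inv, ← log_mul (by positivity) (by linarith), hudef, add_sub_cancel,
      inv_mul_cancel_left₀ hp0.ne']
  have hw : u * (1 - p / 2) ≤ log (1 + u) := by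
    refine le_trans ?_ (le_log_one_add_of_nonneg hu0)
    rw [le_div_iff₀ (by linarith)]
    nlinarith [mul_nonneg hu0 (by linarith : 0 ≤ p - u), mul_nonneg (mul_nonneg hu0 hu0) hp0.le]
  have hmain : u * (-log p * q) ≤ log (1 + u) * (q + p * (1 - q)) :=
    calc u * (-log p * q) ≤ u * (1 - p / 2) * (q + p * (1 - q)) := by
          rw [mul_assoc]; exact mul_le_mul_of_nonneg_left key hu0
      _ ≤ log (1 + u) * (q + p * (1 - q)) := by gcongr; nlinarith
  rw [div_le_div_iff₀ (by nlinarith) (by nlinarith), hlogy]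
  linear_combination mul_le_mul_of_nonneg_left hmain hq0.le + (q * log p * q) * hudef

theorem stmt_11_general (q p : ℝ) (hq0 : 0 < q)
    (hp0 : 0 < p) (hp : p ≤ 1 / 2)
    (hfoc : q = Real.log (1 - p) / Real.log p)
    (N : ℕ) (hN : N = ⌈1 / p⌉₊) :
    Real.log N / (((N : ℝ) + 1) / 2 + (1 - q) / q) ≥
      q * Real.log N / ((N : ℝ) * q + 1 - q) ∧
    q * Real.log N / ((N : ℝ) * q + 1 - q) ≥
      -(q * p * Real.log p) / (q + p * (1 - q)) := by
  have hNge : 1 / p ≤ N := hN ▸ Nat.le_ceil _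
  have hNle : N ≤ 1 / p + 1 := hN ▸ (Nat.ceil_lt_add_one (by positivity)).le
  have hN1 : 1 ≤ (N : ℝ) := le_trans (by rw [le_div_iff₀ hp0]; linarith) hNge
  exact ⟨mul_div_mul_add_one_sub_le hq0 hN1 (log_nonneg hN1),
    neg_mul_log_div_le_mul_log_div hp0 hp hfoc hNge hNle⟩

/-- For q ∈ (0,1), p* ∈ (0,1/2] with q = log(1-p*)/log(p*), and N = ⌈1/p*⌉:
log(N)/((N+1)/2 + (1-q)/q) ≥ q·log(N)/(N·q+1-q) ≥ -q·p*·log(p*)/(q+p*(1-q)). -/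
theorem stmt_11 (q p : ℝ) (hq0 : 0 < q) (hq1 : q < 1)
    (hp0 : 0 < p) (hp : p ≤ 1 / 2)
    (hfoc : q = Real.log (1 - p) / Real.log p)
    (N : ℕ) (hN : N = ⌈1 / p⌉₊) :
    Real.log N / (((N : ℝ) + 1) / 2 + (1 - q) / q) ≥
      q * Real.log N / ((N : ℝ) * q + 1 - q) ∧
    q * Real.log N / ((N : ℝ) * q + 1 - q) ≥
      -(q * p * Real.log p) / (q + p * (1 - q)) :=
  stmt_11_general q p hq0 hp0 hp hfoc N hN
end

section
/- Define C(q) = max_{p∈[0,1]} q·H₂(p)/(q + p(1-q)) and R(q) = -q·p*(q)·log₂(p*(q))/(q + p*(q)(1-q)), where p*(q) ∈ (0,1/2] solves q = ln(1-p)/ln(p). Then lim_{q→0⁺} C(q)/R(q) = 1. -/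
/-!
Write `t = -log p*` and `L = -log q`. The root condition says `q t = -log (1 - p*)`, which lies
in `[p*, 2 p*]`. This forces `p* → 0` and `L = t + log t + O(1)`, so `t ~ L` and `q / p* → 0`;
hence `R(q) ~ q L / log 2`. Dropping the nonnegative `(1 - p)` term of `H₂` shows `R(q) ≤ C(q)`,
while `H₂(p) ≤ p (1 - ln p) / ln 2` bounds the objective uniformly by
`q (1 + L) / ((1 - q) log 2) ~ q L / log 2`. So `C(q) / R(q)` is squeezed to `1`.
-/

open Real Filter Topology Asymptotics

namespace Asymptotics

theorem IsEquivalent.mul_tendsto_one {α β : Type*} [NormedField β] {l : Filter α}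
    {u v w : α → β} (huv : u ~[l] v) (hw : Tendsto w l (𝓝 1)) : u * w ~[l] v := by
  simpa using huv.mul ((isEquivalent_const_iff_tendsto one_ne_zero).2 hw)

theorem IsEquivalent.tendsto_div_of_le_of_le {α : Type*} {l : Filter α} {f g h : α → ℝ}
    (hhf : h ~[l] f) (hf : ∀ᶠ x in l, 0 < f x) (hfg : ∀ᶠ x in l, f x ≤ g x)
    (hgh : ∀ᶠ x in l, g x ≤ h x) : Tendsto (g / f) l (𝓝 1) := by
  refine tendsto_of_tendsto_of_tendsto_of_le_of_le' tendsto_const_nhds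
    ((isEquivalent_iff_tendsto_one (hf.mono fun _ hx => hx.ne')).1 hhf) ?_ ?_
  · filter_upwards [hf, hfg] with x hfx hfgx
    exact (one_le_div hfx).2 hfgx
  · filter_upwards [hf, hgh] with x hfx hghx
    exact div_le_div_of_nonneg_right hghx hfx.le

end Asymptotics

namespace Real

theorem le_neg_log_one_sub {p : ℝ} (hp : p < 1) : p ≤ -log (1 - p) := by
  linarith [log_le_sub_one_of_pos (sub_pos.2 hp)]

theorem neg_log_one_sub_le_two_mul {p : ℝ} (hp0 : 0 ≤ p) (hp : p ≤ 1 / 2) :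
    -log (1 - p) ≤ 2 * p := by
  have h1p : 0 < 1 - p := by linarith
  have := one_sub_inv_le_log_of_pos h1p
  have : (1 - p)⁻¹ ≤ 1 + 2 * p := by
    rw [inv_le_iff_one_le_mul₀ h1p]; nlinarith
  linarith

theorem mul_log_sub_log_le {x y : ℝ} (hx : 0 ≤ x) (hy : 0 < y) :
    x * (log y - log x) ≤ y - x := by
  rcases hx.eq_or_lt with rfl | hx
  · simpa using hy.le
  · have := log_le_sub_one_of_pos (div_pos hy hx)
    rw [log_div hy.ne' hx.ne'] at this
    calc x * (log y - log x) ≤ x * (y / x - 1) := by gcongr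
      _ = y - x := by field_simp

theorem binEntropy_le_mul_one_sub_log {x : ℝ} (hx : x ≤ 1) :
    binEntropy x ≤ x * (1 - log x) := by
  rw [binEntropy_eq_negMulLog_add_negMulLog_one_sub]
  have := negMulLog_le_one_sub_self (sub_nonneg.2 hx)
  simp only [negMulLog] at this ⊢
  linarith

theorem binEntropy_div_log_two (x : ℝ) :
    binEntropy x / log 2 = -(x * logb 2 x) - (1 - x) * logb 2 (1 - x) := by
  simp only [binEntropy_eq_negMulLog_add_negMulLog_one_sub, negMulLog, logb]
  ring

end Real

theorem mul_binEntropy_div_le {q x : ℝ} (hq : 0 < q) (hq1 : q < 1) (hx : 0 ≤ x) (hx1 : x ≤ 1) :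
    q * binEntropy x / (q + x * (1 - q)) ≤ q * (1 - log q) / (1 - q) := by
  have hd : 0 < q + x * (1 - q) := by nlinarith
  have hlog : log q ≤ 0 := log_nonpos hq.le hq1.le
  have key : x * (1 - log x) * (1 - q) ≤ (1 - log q) * (q + x * (1 - q)) := by
    nlinarith [mul_log_sub_log_le hx hq]
  rw [div_le_div_iff₀ hd (by linarith)]
  calc q * binEntropy x * (1 - q) ≤ q * (x * (1 - log x)) * (1 - q) := by
        gcongr
        exact binEntropy_le_mul_one_sub_log hx1
    _ ≤ q * (1 - log q) * (q + x * (1 - q)) := by nlinarith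

theorem isEquivalent_mul_one_sub_log_div :
    (fun q => q * (1 - log q) / (1 - q) / log 2) ~[𝓝[>] 0] fun q => q * -log q / log 2 := by
  have hlog : Tendsto (fun q => -log q) (𝓝[>] 0) atTop :=
    tendsto_neg_atBot_atTop.comp tendsto_log_nhdsGT_zero
  have hinv : Tendsto (fun q : ℝ => (1 - q)⁻¹) (𝓝[>] 0) (𝓝 1) := by
    simpa using ((tendsto_const_nhds (x := (1 : ℝ))).sub
      (tendsto_nhdsWithin_of_tendsto_nhds tendsto_id)).inv₀ (by norm_num : (1 : ℝ) - 0 ≠ 0)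
  have h := ((IsEquivalent.refl (u := fun q : ℝ => q / log 2)).mul
    ((IsEquivalent.refl (u := fun q => -log q)).add_const_of_norm_tendsto_atTop (c := 1)
      (tendsto_norm_atTop_atTop.comp hlog))).mul_tendsto_one hinv
  refine (h.congr_left ?_).congr_right ?_ <;>
    exact Eventually.of_forall fun q => by simp only [Pi.mul_apply]; ring

theorem le_mul_neg_log_le_two_mul {p q : ℝ} (hp0 : 0 < p) (hp : p ≤ 1 / 2)
    (h : q = log (1 - p) / log p) : p ≤ q * -log p ∧ q * -log p ≤ 2 * p := by
  have hlog : log p ≠ 0 := (log_neg hp0 (by linarith)).ne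
  have : q * -log p = -log (1 - p) := by rw [h]; field_simp
  rw [this]
  exact ⟨le_neg_log_one_sub (by linarith), neg_log_one_sub_le_two_mul hp0.le hp⟩

section ImplicitRoot

variable {p : ℝ → ℝ}

theorem tendsto_nhdsGT_zero_of_le_mul_neg_log
    (hp : ∀ᶠ q in 𝓝[>] 0, 0 < p q ∧ p q ≤ q * -log (p q)) :
    Tendsto p (𝓝[>] 0) (𝓝[>] 0) := by
  have hsqrt : Tendsto sqrt (𝓝[>] 0) (𝓝 0) :=
    (continuous_sqrt.tendsto' 0 0 sqrt_zero).mono_left nhdsWithin_le_nhds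
  have hle : ∀ᶠ q in 𝓝[>] 0, p q ≤ sqrt q := by
    filter_upwards [hp, self_mem_nhdsWithin] with q ⟨hp0, hpq⟩ (hq : 0 < q)
    -- `-log p < 1 / p` turns `p ≤ q * -log p` into `p ^ 2 ≤ q`
    have hinv : -log (p q) ≤ (p q)⁻¹ - 1 := by
      simpa [log_inv] using log_le_sub_one_of_pos (inv_pos.2 hp0)
    have : p q ≤ q / p q :=
      calc p q ≤ q * -log (p q) := hpq
        _ ≤ q * (p q)⁻¹ := by gcongr; linarith
        _ = q / p q := (div_eq_mul_inv _ _).symm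
    exact le_sqrt_of_sq_le (by rw [sq]; exact (le_div_iff₀ hp0).1 this)
  refine tendsto_nhdsWithin_iff.2 ⟨?_, hp.mono fun _ h => h.1⟩
  exact tendsto_of_tendsto_of_tendsto_of_le_of_le' tendsto_const_nhds hsqrt
    (hp.mono fun _ h => h.1.le) hle

variable (hp : ∀ᶠ q in 𝓝[>] 0, 0 < p q ∧ p q ≤ q * -log (p q) ∧ q * -log (p q) ≤ 2 * p q)
include hp

theorem tendsto_neg_log_atTop_of_le_mul_neg_log :
    Tendsto (fun q => -log (p q)) (𝓝[>] 0) atTop :=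
  tendsto_neg_atBot_atTop.comp <| tendsto_log_nhdsGT_zero.comp <|
    tendsto_nhdsGT_zero_of_le_mul_neg_log (hp.mono fun _ h => ⟨h.1, h.2.1⟩)

theorem isEquivalent_neg_log_of_le_mul_neg_log :
    (fun q => -log (p q)) ~[𝓝[>] 0] fun q => -log q := by
  set t := fun q => -log (p q)
  have ht := tendsto_neg_log_atTop_of_le_mul_neg_log hp
  refine IsEquivalent.symm (IsLittleO.isEquivalent ?_)
  -- `-log q = t + log t - log (q t / p)`, and `q t / p ∈ [1, 2]`
  have hdiff : (fun q => -log q) - t =ᶠ[𝓝[>] 0] fun q => log (t q) - log (q * t q / p q) := by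
    filter_upwards [hp, ht.eventually_gt_atTop 0, self_mem_nhdsWithin]
      with q ⟨hp0, _, _⟩ htq (hq : 0 < q)
    rw [log_div (by positivity) hp0.ne', log_mul hq.ne' htq.ne']
    simp only [Pi.sub_apply, t]
    ring
  refine IsLittleO.congr' ?_ hdiff.symm EventuallyEq.rfl
  have hlog : (fun q => log (t q)) =o[𝓝[>] 0] t := isLittleO_log_id_atTop.comp_tendsto ht
  have hbdd : (fun q => log (q * t q / p q)) =O[𝓝[>] 0] fun _ => (1 : ℝ) := by
    refine IsBigO.of_bound (log 2) ?_
    filter_upwards [hp, ht.eventually_gt_atTop 0, self_mem_nhdsWithin]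
      with q ⟨hp0, hlo, hhi⟩ htq (hq : 0 < q)
    have h1 : 1 ≤ q * t q / p q := (one_le_div hp0).2 hlo
    have h2 : q * t q / p q ≤ 2 := (div_le_iff₀ hp0).2 hhi
    rw [norm_one, mul_one, norm_of_nonneg (log_nonneg h1)]
    exact log_le_log (by linarith) h2
  exact hlog.sub (hbdd.trans_isLittleO
    ((isLittleO_one_left_iff ℝ).2 (tendsto_norm_atTop_atTop.comp ht)))

theorem tendsto_div_add_mul_one_sub_of_le_mul_neg_log :
    Tendsto (fun q => p q / (q + p q * (1 - q))) (𝓝[>] 0) (𝓝 1) := by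
  have ht := tendsto_neg_log_atTop_of_le_mul_neg_log hp
  have hq : Tendsto (fun q : ℝ => q) (𝓝[>] 0) (𝓝 0) :=
    tendsto_nhdsWithin_of_tendsto_nhds tendsto_id
  have hratio : Tendsto (fun q => q / p q) (𝓝[>] 0) (𝓝 0) := by
    refine tendsto_of_tendsto_of_tendsto_of_le_of_le' tendsto_const_nhds
      ((tendsto_const_nhds (x := (2 : ℝ))).div_atTop ht) ?_ ?_
    · filter_upwards [hp, self_mem_nhdsWithin] with q ⟨hp0, _, _⟩ (hq : 0 < q)
      positivity
    · filter_upwards [hp, ht.eventually_gt_atTop 0] with q ⟨hp0, _, hhi⟩ htq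
      rw [div_le_div_iff₀ hp0 htq]
      linarith
  have hlim :=
    (hratio.add (tendsto_const_nhds.sub hq)).inv₀ (by norm_num : (0 : ℝ) + (1 - 0) ≠ 0)
  rw [show ((0 : ℝ) + (1 - 0))⁻¹ = 1 by norm_num] at hlim
  refine hlim.congr' ?_
  filter_upwards [hp] with q ⟨hp0, _, _⟩
  field_simp

theorem isEquivalent_neg_mul_logb_div_of_le_mul_neg_log :
    (fun q => -(q * p q * logb 2 (p q)) / (q + p q * (1 - q))) ~[𝓝[>] 0]
      fun q => q * -log q / log 2 := by
  have h := ((IsEquivalent.refl (u := fun q : ℝ => q / log 2)).mul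
    (isEquivalent_neg_log_of_le_mul_neg_log hp)).mul_tendsto_one
    (tendsto_div_add_mul_one_sub_of_le_mul_neg_log hp)
  refine (h.congr_left ?_).congr_right ?_ <;>
    exact Eventually.of_forall fun q => by simp only [Pi.mul_apply, logb]; ring

end ImplicitRoot

/-- With C(q) = max_{p∈[0,1]} qH₂(p)/(q+p(1-q)) and
R(q) = -q·p*(q)·log₂(p*(q))/(q+p*(q)(1-q)), where p*(q) ∈ (0,1/2] solves
q = ln(1-p)/ln(p), we have C(q)/R(q) → 1 as q → 0⁺. -/
theorem stmt_12 (pstar : ℝ → ℝ)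
    (hpstar : ∀ q : ℝ, 0 < q → q < 1 →
      0 < pstar q ∧ pstar q ≤ 1 / 2 ∧
        q = Real.log (1 - pstar q) / Real.log (pstar q)) :
    Filter.Tendsto
      (fun q : ℝ =>
        (⨆ p : Set.Icc (0 : ℝ) 1,
            q * (-(↑p * Real.logb 2 ↑p) - (1 - ↑p) * Real.logb 2 (1 - ↑p)) /
              (q + ↑p * (1 - q))) /
          (-(q * pstar q * Real.logb 2 (pstar q)) / (q + pstar q * (1 - q))))
      (nhdsWithin 0 (Set.Ioi 0)) (nhds 1) := by
  have hq : ∀ᶠ q in 𝓝[>] (0 : ℝ), 0 < q ∧ q < 1 := Ioo_mem_nhdsGT one_pos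
  have hp : ∀ᶠ q in 𝓝[>] 0,
      0 < pstar q ∧ pstar q ≤ q * -log (pstar q) ∧ q * -log (pstar q) ≤ 2 * pstar q := by
    filter_upwards [hq] with q ⟨hq0, hq1⟩
    obtain ⟨hp0, hp2, heq⟩ := hpstar q hq0 hq1
    exact ⟨hp0, le_mul_neg_log_le_two_mul hp0 hp2 heq⟩
  have hupper (q : ℝ) (hq0 : 0 < q) (hq1 : q < 1) (x : Set.Icc (0 : ℝ) 1) :
      q * (-(↑x * logb 2 ↑x) - (1 - ↑x) * logb 2 (1 - ↑x)) / (q + ↑x * (1 - q)) ≤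
        q * (1 - log q) / (1 - q) / log 2 := by
    rw [← binEntropy_div_log_two, mul_div_assoc', div_right_comm]
    exact div_le_div_of_nonneg_right (mul_binEntropy_div_le hq0 hq1 x.2.1 x.2.2)
      (log_pos one_lt_two).le
  refine (isEquivalent_mul_one_sub_log_div.trans
    (isEquivalent_neg_mul_logb_div_of_le_mul_neg_log hp).symm).tendsto_div_of_le_of_le ?_ ?_ ?_
  · filter_upwards [hq] with q ⟨hq0, hq1⟩
    obtain ⟨hp0, hp2, -⟩ := hpstar q hq0 hq1
    have := logb_neg one_lt_two hp0 (by linarith)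
    exact div_pos (by nlinarith [mul_pos hq0 hp0]) (by nlinarith)
  · filter_upwards [hq] with q ⟨hq0, hq1⟩
    obtain ⟨hp0, hp2, -⟩ := hpstar q hq0 hq1
    refine le_ciSup_of_le ⟨_, Set.forall_mem_range.2 (hupper q hq0 hq1)⟩
      ⟨pstar q, hp0.le, by linarith⟩ (div_le_div_of_nonneg_right ?_ (by nlinarith))
    have := logb_nonpos one_lt_two (by linarith : 0 ≤ 1 - pstar q) (by linarith)
    dsimp only
    nlinarith [mul_nonneg (mul_nonneg hq0.le (by linarith : 0 ≤ 1 - pstar q)) (neg_nonneg.2 this)]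
  · filter_upwards [hq] with q ⟨hq0, hq1⟩
    exact ciSup_le (hupper q hq0 hq1)
end
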